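/- arXiv:1612.00790 — 7 statements merged into one kernel-verified Lean document; each statement's English description precedes it below -/
import Mathlib

section
/- If A is a Poisson random variable with mean λ > 0, then E[|A − λ|³] ≤ 3·max(λ, λ^(3/2)). -/
open Real

/-- The Poisson probability mass function with mean `lam`. -/
noncomputable def poissonPMF (lam : ℝ) (n : ℕ) : ℝ :=
  Real.exp (-lam) * lam ^ n / n.factorial

noncomputable def pg (lam : ℝ) (k n : ℕ) : ℝ := (n.descFactorial k : ℝ) * lam ^ n / n.factorial

lemma tsum_exp (lam : ℝ) : ∑' n : ℕ, lam ^ n / n.factorial = Real.exp lam := by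
  rw [Real.exp_eq_exp_ℝ, NormedSpace.exp_eq_tsum_div]

lemma pg_shift (lam : ℝ) (k m : ℕ) : pg lam k (m + k) = lam ^ k * (lam ^ m / m.factorial) := by
  have h : (m.factorial : ℝ) * ((m + k).descFactorial k : ℝ) = ((m + k).factorial : ℝ) := by
    rw [← Nat.cast_mul, ← Nat.factorial_mul_descFactorial (Nat.le_add_left k m)]
    simp
  have hm : (m.factorial : ℝ) ≠ 0 := Nat.cast_ne_zero.2 m.factorial_ne_zero
  have hmk : ((m + k).factorial : ℝ) ≠ 0 := Nat.cast_ne_zero.2 (m + k).factorial_ne_zero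
  simp only [pg]
  field_simp
  rw [← h, pow_add]
  ring

lemma pg_notrange (lam : ℝ) (k : ℕ) : ∀ n ∉ Set.range (· + k), pg lam k n = 0 := by
  intro n hn
  have h : n < k := by
    by_contra h
    exact hn ⟨n - k, by show n - k + k = n; omega⟩
  simp [pg, Nat.descFactorial_eq_zero_iff_lt.2 h]

lemma summable_pg (lam : ℝ) (k : ℕ) : Summable (pg lam k) := by
  rw [← Function.Injective.summable_iff (add_left_injective k) (pg_notrange lam k)]
  have : (pg lam k ∘ (· + k)) = fun m => lam ^ k * (lam ^ m / m.factorial) := by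
    funext m; exact pg_shift lam k m
  rw [this]
  exact (Real.summable_pow_div_factorial lam).mul_left _

lemma tsum_pg (lam : ℝ) (k : ℕ) : ∑' n, pg lam k n = lam ^ k * Real.exp lam := by
  rw [← Function.Injective.tsum_eq (add_left_injective k)
    (fun n hn => by by_contra h; exact hn (pg_notrange lam k n h))]
  simp_rw [pg_shift lam k]
  rw [tsum_mul_left, tsum_exp]

lemma cast_desc1 (n : ℕ) : (n.descFactorial 1 : ℝ) = n := by simp

lemma cast_desc2 (n : ℕ) : (n.descFactorial 2 : ℝ) = n * (n - 1) := by
  rcases n with _ | n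
  · simp
  · simp [Nat.descFactorial]; ring

lemma cast_desc3 (n : ℕ) : (n.descFactorial 3 : ℝ) = n * (n - 1) * (n - 2) := by
  rcases n with _ | _ | n
  · simp
  · simp [Nat.descFactorial]
  · simp [Nat.descFactorial]; ring

lemma cast_desc4 (n : ℕ) : (n.descFactorial 4 : ℝ) = n * (n - 1) * (n - 2) * (n - 3) := by
  rcases n with _ | _ | _ | n
  · simp
  · simp [Nat.descFactorial]
  · simp [Nat.descFactorial]
  · simp [Nat.descFactorial]; ring

lemma summable_comb (lam a b c d e : ℝ) :
    Summable (fun n => a * pg lam 4 n + (b * pg lam 3 n +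
      (c * pg lam 2 n + (d * pg lam 1 n + e * pg lam 0 n)))) :=
  ((summable_pg lam 4).mul_left a).add (((summable_pg lam 3).mul_left b).add
    (((summable_pg lam 2).mul_left c).add (((summable_pg lam 1).mul_left d).add
      ((summable_pg lam 0).mul_left e))))

lemma tsum_comb (lam a b c d e : ℝ) :
    ∑' n, (a * pg lam 4 n + (b * pg lam 3 n +
      (c * pg lam 2 n + (d * pg lam 1 n + e * pg lam 0 n))))
    = (a * lam^4 + b * lam^3 + c * lam^2 + d * lam + e) * Real.exp lam := by
  rw [Summable.tsum_add ((summable_pg lam 4).mul_left a) (((summable_pg lam 3).mul_left b).add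
    (((summable_pg lam 2).mul_left c).add (((summable_pg lam 1).mul_left d).add
      ((summable_pg lam 0).mul_left e)))),
    Summable.tsum_add ((summable_pg lam 3).mul_left b)
    (((summable_pg lam 2).mul_left c).add (((summable_pg lam 1).mul_left d).add
      ((summable_pg lam 0).mul_left e))),
    Summable.tsum_add ((summable_pg lam 2).mul_left c) (((summable_pg lam 1).mul_left d).add
      ((summable_pg lam 0).mul_left e)),
    Summable.tsum_add ((summable_pg lam 1).mul_left d) ((summable_pg lam 0).mul_left e),
    tsum_mul_left, tsum_mul_left, tsum_mul_left, tsum_mul_left, tsum_mul_left,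
    tsum_pg, tsum_pg, tsum_pg, tsum_pg, tsum_pg]
  ring

lemma keyV (lam : ℝ) (n : ℕ) : ((n:ℝ) - lam)^2 * poissonPMF lam n
    = Real.exp (-lam) * (0 * pg lam 4 n + (0 * pg lam 3 n +
      (1 * pg lam 2 n + ((1 - 2*lam) * pg lam 1 n + lam^2 * pg lam 0 n)))) := by
  simp only [poissonPMF, pg, cast_desc4, cast_desc3, cast_desc2, cast_desc1,
    Nat.descFactorial_zero, Nat.cast_one, mul_div_assoc]
  ring

lemma keyQ (lam : ℝ) (n : ℕ) : ((n:ℝ) - lam)^4 * poissonPMF lam n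
    = Real.exp (-lam) * (1 * pg lam 4 n + ((6 - 4*lam) * pg lam 3 n +
      ((7 - 12*lam + 6*lam^2) * pg lam 2 n +
        ((1 - 4*lam + 6*lam^2 - 4*lam^3) * pg lam 1 n + lam^4 * pg lam 0 n)))) := by
  simp only [poissonPMF, pg, cast_desc4, cast_desc3, cast_desc2, cast_desc1,
    Nat.descFactorial_zero, Nat.cast_one, mul_div_assoc]
  ring

lemma summable_V (lam : ℝ) : Summable (fun n : ℕ => ((n:ℝ) - lam)^2 * poissonPMF lam n) := by
  simp_rw [keyV]
  exact (summable_comb lam 0 0 1 (1 - 2*lam) (lam^2)).mul_left _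

lemma summable_Q (lam : ℝ) : Summable (fun n : ℕ => ((n:ℝ) - lam)^4 * poissonPMF lam n) := by
  simp_rw [keyQ]
  exact (summable_comb lam 1 (6-4*lam) (7-12*lam+6*lam^2) (1-4*lam+6*lam^2-4*lam^3) (lam^4)).mul_left _

lemma tsum_V (lam : ℝ) : ∑' n : ℕ, ((n:ℝ) - lam)^2 * poissonPMF lam n = lam := by
  simp_rw [keyV]
  rw [tsum_mul_left, tsum_comb, Real.exp_neg]
  have := Real.exp_pos lam
  field_simp
  ring

lemma tsum_Q (lam : ℝ) : ∑' n : ℕ, ((n:ℝ) - lam)^4 * poissonPMF lam n = lam + 3*lam^2 := by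
  simp_rw [keyQ]
  rw [tsum_mul_left, tsum_comb, Real.exp_neg]
  have := Real.exp_pos lam
  field_simp
  ring

lemma pmf_nonneg (lam : ℝ) (hlam : 0 < lam) (n : ℕ) : 0 ≤ poissonPMF lam n := by
  unfold poissonPMF
  positivity

lemma abs_cube_le (t x : ℝ) (ht : 0 < t) : |x|^3 ≤ (t/2) * x^2 + (1/(2*t)) * x^4 := by
  have hc : |x|^3 = x^2 * |x| := by rw [pow_succ, sq_abs]
  have h1 : 2*t*|x|^3 ≤ t^2*x^2 + x^4 := by
    rw [hc]
    nlinarith [sq_nonneg (t*|x| - x^2), sq_abs x, abs_nonneg x]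
  have h2 : (t/2) * x^2 + (1/(2*t)) * x^4 = (t^2*x^2 + x^4) / (2*t) := by
    field_simp
  rw [h2, le_div_iff₀ (by positivity)]
  nlinarith [h1]

lemma main_bound (lam t : ℝ) (hlam : 0 < lam) (ht : 0 < t) :
    ∑' n : ℕ, |(n : ℝ) - lam| ^ 3 * poissonPMF lam n
      ≤ (t/2) * lam + (1/(2*t)) * (lam + 3*lam^2) := by
  set G : ℕ → ℝ := fun n => (t/2) * (((n:ℝ) - lam)^2 * poissonPMF lam n)
      + (1/(2*t)) * (((n:ℝ) - lam)^4 * poissonPMF lam n) with hG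
  have hsG : Summable G := ((summable_V lam).mul_left _).add ((summable_Q lam).mul_left _)
  have hle : ∀ n : ℕ, |(n : ℝ) - lam| ^ 3 * poissonPMF lam n ≤ G n := by
    intro n
    have := abs_cube_le t ((n:ℝ) - lam) ht
    have hp := pmf_nonneg lam hlam n
    have := mul_le_mul_of_nonneg_right this hp
    calc |(n : ℝ) - lam| ^ 3 * poissonPMF lam n
        ≤ ((t/2) * ((n:ℝ) - lam)^2 + (1/(2*t)) * ((n:ℝ) - lam)^4) * poissonPMF lam n := this
      _ = G n := by rw [hG]; ring
  have hsF : Summable (fun n : ℕ => |(n : ℝ) - lam| ^ 3 * poissonPMF lam n) :=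
    Summable.of_nonneg_of_le (fun n => mul_nonneg (by positivity) (pmf_nonneg lam hlam n)) hle hsG
  calc ∑' n : ℕ, |(n : ℝ) - lam| ^ 3 * poissonPMF lam n
      ≤ ∑' n, G n := Summable.tsum_le_tsum hle hsF hsG
    _ = (t/2) * lam + (1/(2*t)) * (lam + 3*lam^2) := by
        rw [hG, Summable.tsum_add ((summable_V lam).mul_left _) ((summable_Q lam).mul_left _),
          tsum_mul_left, tsum_mul_left, tsum_V, tsum_Q]

/-- If `A ~ Poisson(lam)` with `lam > 0`, then
`E[|A − lam|³] ≤ 3 · max(lam, lam^(3/2))`. -/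
theorem poisson_third_abs_central_moment (lam : ℝ) (hlam : 0 < lam) :
    ∑' n : ℕ, |(n : ℝ) - lam| ^ 3 * poissonPMF lam n
      ≤ 3 * max lam (lam ^ ((3 : ℝ) / 2)) := by
  rcases le_or_gt lam 1 with hl | hl
  · calc ∑' n : ℕ, |(n : ℝ) - lam| ^ 3 * poissonPMF lam n
        ≤ (1/2) * lam + (1/(2*1)) * (lam + 3*lam^2) := main_bound lam 1 hlam one_pos
      _ ≤ 3 * lam := by nlinarith
      _ ≤ 3 * max lam (lam ^ ((3 : ℝ) / 2)) := by
          have := le_max_left lam (lam ^ ((3 : ℝ) / 2)); linarith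
  · set s := Real.sqrt lam with hs
    have hs0 : 0 < s := Real.sqrt_pos.2 hlam
    have hs2 : s^2 = lam := Real.sq_sqrt hlam.le
    have hs1 : 1 ≤ s := by nlinarith
    have h32 : lam ^ ((3 : ℝ) / 2) = s ^ 3 := by
      rw [show ((3:ℝ)/2) = (1/2:ℝ) * ((3:ℕ):ℝ) by norm_num, Real.rpow_mul hlam.le,
        Real.rpow_natCast, hs, Real.sqrt_eq_rpow]
    calc ∑' n : ℕ, |(n : ℝ) - lam| ^ 3 * poissonPMF lam n
        ≤ (s/2) * lam + (1/(2*s)) * (lam + 3*lam^2) := main_bound lam s hlam hs0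
      _ = 2*s^3 + s/2 := by rw [← hs2]; field_simp; ring
      _ ≤ 3 * (lam ^ ((3 : ℝ) / 2)) := by rw [h32]; nlinarith
      _ ≤ 3 * max lam (lam ^ ((3 : ℝ) / 2)) := by
          have := le_max_right lam (lam ^ ((3 : ℝ) / 2)); linarith
end

section
/- If D is a binomial random variable with parameters M ∈ ℕ and r ∈ [0,1], then E[|D − Mr|³] ≤ 3·max(Mr, (Mr)^(3/2)). -/
open Real

/-- The binomial probability mass function with parameters `M` and `r`. -/
noncomputable def binomPMF (M : ℕ) (r : ℝ) (k : ℕ) : ℝ :=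
  (M.choose k : ℝ) * r ^ k * (1 - r) ^ (M - k)

lemma binomPMF_nonneg {M : ℕ} {r : ℝ} (hr0 : 0 ≤ r) (hr1 : r ≤ 1) (k : ℕ) :
    0 ≤ binomPMF M r k := by
  unfold binomPMF
  have : (0:ℝ) ≤ 1 - r := by linarith
  positivity

lemma sum_binomPMF (M : ℕ) (r : ℝ) :
    ∑ k ∈ Finset.range (M + 1), binomPMF M r k = 1 := by
  have h : ∑ k ∈ Finset.range (M + 1), binomPMF M r k = (r + (1 - r)) ^ M := by
    rw [add_pow]
    apply Finset.sum_congr rfl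
    intro k _
    unfold binomPMF
    ring
  rw [h]
  norm_num

lemma sum_choose_binomPMF (M j : ℕ) (r : ℝ) :
    ∑ k ∈ Finset.range (M + 1), (k.choose j : ℝ) * binomPMF M r k
      = (M.choose j : ℝ) * r ^ j := by
  by_cases hj : j ≤ M
  · have hzero : ∑ k ∈ Finset.range (M + 1), (k.choose j : ℝ) * binomPMF M r k
        = ∑ k ∈ Finset.Ico j (M + 1), (k.choose j : ℝ) * binomPMF M r k := by
      rw [Finset.range_eq_Ico, ← Finset.sum_Ico_consecutive _ (Nat.zero_le j)
        (by omega : j ≤ M + 1)]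
      have : ∑ k ∈ Finset.Ico 0 j, (k.choose j : ℝ) * binomPMF M r k = 0 := by
        apply Finset.sum_eq_zero
        intro k hk
        simp only [Finset.mem_Ico] at hk
        rw [Nat.choose_eq_zero_of_lt hk.2]
        simp
      rw [this, zero_add]
    rw [hzero, Finset.sum_Ico_eq_sum_range]
    have hM : M + 1 - j = (M - j) + 1 := by omega
    rw [hM]
    have hterm : ∀ i ∈ Finset.range ((M - j) + 1),
        ((j + i).choose j : ℝ) * binomPMF M r (j + i)
          = ((M.choose j : ℝ) * r ^ j) * binomPMF (M - j) r i := by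
      intro i hi
      simp only [Finset.mem_range] at hi
      have hiM : i ≤ M - j := by omega
      have hkM : j + i ≤ M := by omega
      have hcm : M.choose (j + i) * (j + i).choose j = M.choose j * (M - j).choose i := by
        have := Nat.choose_mul (n := M) (k := j + i) (s := j) (Nat.le_add_right j i)
        simpa using this
      unfold binomPMF
      have hsub : M - (j + i) = (M - j) - i := by omega
      have hpow : r ^ (j + i) = r ^ j * r ^ i := by rw [pow_add]
      rw [hsub, hpow]
      have hc : (M.choose (j + i) : ℝ) * ((j + i).choose j : ℝ)
          = (M.choose j : ℝ) * ((M - j).choose i : ℝ) := by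
        exact_mod_cast congrArg (Nat.cast : ℕ → ℝ) hcm
      linear_combination (r ^ j * r ^ i * (1 - r) ^ (M - j - i)) * hc
    rw [Finset.sum_congr rfl hterm, ← Finset.mul_sum, sum_binomPMF (M - j) r, mul_one]
  · push_neg at hj
    rw [Nat.choose_eq_zero_of_lt hj]
    simp only [Nat.cast_zero, zero_mul]
    apply Finset.sum_eq_zero
    intro k hk
    simp only [Finset.mem_range] at hk
    rw [Nat.choose_eq_zero_of_lt (by omega : k < j)]
    simp

lemma cast_choose_two' (n : ℕ) : (n.choose 2 : ℝ) = n * (n - 1) / 2 := by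
  induction n with
  | zero => simp
  | succ m ih =>
    rw [Nat.choose_succ_succ]
    push_cast
    rw [Nat.choose_one_right, ih]
    push_cast
    ring

lemma cast_choose_three' (n : ℕ) : (n.choose 3 : ℝ) = n * (n - 1) * (n - 2) / 6 := by
  induction n with
  | zero => simp
  | succ m ih =>
    rw [Nat.choose_succ_succ]
    push_cast
    rw [cast_choose_two', ih]
    push_cast
    ring

lemma cast_choose_four' (n : ℕ) : (n.choose 4 : ℝ) = n * (n - 1) * (n - 2) * (n - 3) / 24 := by
  induction n with
  | zero => simp
  | succ m ih =>
    rw [Nat.choose_succ_succ]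
    push_cast
    rw [cast_choose_three', ih]
    push_cast
    ring

lemma sum_id_binomPMF (M : ℕ) (r : ℝ) :
    ∑ k ∈ Finset.range (M + 1), (k : ℝ) * binomPMF M r k = (M : ℝ) * r := by
  have h := sum_choose_binomPMF M 1 r
  simp only [Nat.choose_one_right, pow_one] at h
  exact h

lemma binom_var (M : ℕ) (r : ℝ) :
    ∑ k ∈ Finset.range (M + 1), ((k : ℝ) - M * r) ^ 2 * binomPMF M r k
      = (M : ℝ) * r * (1 - r) := by
  set μ : ℝ := (M : ℝ) * r with hμ
  have hterm : ∀ k ∈ Finset.range (M + 1),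
      ((k : ℝ) - μ) ^ 2 * binomPMF M r k
        = 2 * ((k.choose 2 : ℝ) * binomPMF M r k)
          + (1 - 2 * μ) * ((k : ℝ) * binomPMF M r k)
          + μ ^ 2 * binomPMF M r k := by
    intro k _
    rw [cast_choose_two' k]
    ring
  rw [Finset.sum_congr rfl hterm]
  simp only [Finset.sum_add_distrib, ← Finset.mul_sum]
  rw [sum_choose_binomPMF M 2 r, sum_id_binomPMF M r, sum_binomPMF M r,
    cast_choose_two' M]
  ring

lemma binom_mu4 (M : ℕ) (r : ℝ) :
    ∑ k ∈ Finset.range (M + 1), ((k : ℝ) - M * r) ^ 4 * binomPMF M r k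
      = (M : ℝ) * r * (1 - r) * (1 - 6 * r * (1 - r))
        + 3 * ((M : ℝ) * r * (1 - r)) ^ 2 := by
  set μ : ℝ := (M : ℝ) * r with hμ
  have hterm : ∀ k ∈ Finset.range (M + 1),
      ((k : ℝ) - μ) ^ 4 * binomPMF M r k
        = 24 * ((k.choose 4 : ℝ) * binomPMF M r k)
          + (6 * (6 - 4 * μ)) * ((k.choose 3 : ℝ) * binomPMF M r k)
          + (2 * (7 - 12 * μ + 6 * μ ^ 2)) * ((k.choose 2 : ℝ) * binomPMF M r k)
          + (1 - 4 * μ + 6 * μ ^ 2 - 4 * μ ^ 3) * ((k : ℝ) * binomPMF M r k)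
          + μ ^ 4 * binomPMF M r k := by
    intro k _
    rw [cast_choose_four' k, cast_choose_three' k, cast_choose_two' k]
    ring
  rw [Finset.sum_congr rfl hterm]
  simp only [Finset.sum_add_distrib, ← Finset.mul_sum]
  rw [sum_choose_binomPMF M 4 r, sum_choose_binomPMF M 3 r, sum_choose_binomPMF M 2 r,
    sum_id_binomPMF M r, sum_binomPMF M r,
    cast_choose_four' M, cast_choose_three' M, cast_choose_two' M]
  ring

/-- If `D ~ Binomial(M, r)` with `r ∈ [0,1]`, then
`E[|D − Mr|³] ≤ 3 · max(Mr, (Mr)^(3/2))`. -/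
theorem binomial_third_abs_central_moment (M : ℕ) (r : ℝ)
    (hr0 : 0 ≤ r) (hr1 : r ≤ 1) :
    ∑ k ∈ Finset.range (M + 1), |(k : ℝ) - M * r| ^ 3 * binomPMF M r k
      ≤ 3 * max ((M : ℝ) * r) (((M : ℝ) * r) ^ ((3 : ℝ) / 2)) := by
  set μ : ℝ := (M : ℝ) * r with hμ
  have hμ0 : 0 ≤ μ := by positivity
  set mx : ℝ := max μ (μ ^ ((3 : ℝ) / 2)) with hmx
  have hmx0 : 0 ≤ mx := le_trans hμ0 (le_max_left _ _)
  have hq0 : (0:ℝ) ≤ 1 - r := by linarith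
  set σ2 : ℝ := (M : ℝ) * r * (1 - r) with hσ2
  have hσ20 : 0 ≤ σ2 := by positivity
  have hσ2μ : σ2 ≤ μ := by
    rw [hσ2, hμ]
    nlinarith [mul_nonneg (mul_nonneg (Nat.cast_nonneg (α := ℝ) M) hr0) hr0]
  set T : ℝ := ∑ k ∈ Finset.range (M + 1), |(k : ℝ) - μ| ^ 3 * binomPMF M r k with hT
  have hT0 : 0 ≤ T := by
    apply Finset.sum_nonneg
    intro k _
    exact mul_nonneg (by positivity) (binomPMF_nonneg hr0 hr1 k)
  -- Cauchy-Schwarz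
  have hCS : T ^ 2 ≤ σ2 * (σ2 * (1 - 6 * r * (1 - r)) + 3 * σ2 ^ 2) := by
    have := Finset.sum_sq_le_sum_mul_sum_of_sq_eq_mul (Finset.range (M + 1))
      (r := fun k => |(k : ℝ) - μ| ^ 3 * binomPMF M r k)
      (f := fun k => ((k : ℝ) - μ) ^ 2 * binomPMF M r k)
      (g := fun k => ((k : ℝ) - μ) ^ 4 * binomPMF M r k)
      (fun k _ => mul_nonneg (by positivity) (binomPMF_nonneg hr0 hr1 k))
      (fun k _ => mul_nonneg (by positivity) (binomPMF_nonneg hr0 hr1 k))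
      (fun k _ => by
        have habs : (|(k : ℝ) - μ| ^ 3) ^ 2 = ((k : ℝ) - μ) ^ 2 * ((k : ℝ) - μ) ^ 4 := by
          rw [← pow_mul, ← abs_pow, abs_of_nonneg (by positivity : (0:ℝ) ≤ ((k:ℝ) - μ) ^ 6),
            ← pow_add]
        rw [mul_pow, habs]
        ring)
    rw [binom_var M r, binom_mu4 M r] at this
    calc T ^ 2 ≤ σ2 * ((M : ℝ) * r * (1 - r) * (1 - 6 * r * (1 - r))
          + 3 * ((M : ℝ) * r * (1 - r)) ^ 2) := this
      _ = σ2 * (σ2 * (1 - 6 * r * (1 - r)) + 3 * σ2 ^ 2) := by rw [hσ2]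
  have hmu4 : σ2 * (1 - 6 * r * (1 - r)) + 3 * σ2 ^ 2 ≤ σ2 + 3 * σ2 ^ 2 := by
    nlinarith [mul_nonneg hr0 hq0, hσ20]
  have hT2 : T ^ 2 ≤ μ ^ 2 + 3 * μ ^ 3 := by
    calc T ^ 2 ≤ σ2 * (σ2 + 3 * σ2 ^ 2) :=
          le_trans hCS (mul_le_mul_of_nonneg_left hmu4 hσ20)
      _ = σ2 ^ 2 + 3 * σ2 ^ 3 := by ring
      _ ≤ μ ^ 2 + 3 * μ ^ 3 := by
          have h2 := pow_le_pow_left₀ hσ20 hσ2μ 2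
          have h3 := pow_le_pow_left₀ hσ20 hσ2μ 3
          linarith
  -- relate powers to mx
  have hμ2 : μ ^ 2 ≤ mx ^ 2 := by
    apply pow_le_pow_left₀ hμ0 (le_max_left _ _)
  have hμ3 : μ ^ 3 ≤ mx ^ 2 := by
    have h1 : (μ ^ ((3 : ℝ) / 2)) ^ 2 = μ ^ 3 := by
      rw [← Real.rpow_natCast (μ ^ ((3 : ℝ) / 2)) 2, ← Real.rpow_mul hμ0]
      norm_num
    calc μ ^ 3 = (μ ^ ((3 : ℝ) / 2)) ^ 2 := h1.symm
      _ ≤ mx ^ 2 := by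
        apply pow_le_pow_left₀ (Real.rpow_nonneg hμ0 _) (le_max_right _ _)
  have hfinal : T ^ 2 ≤ (2 * mx) ^ 2 := by nlinarith
  have : T ≤ 2 * mx := by nlinarith
  calc T ≤ 2 * mx := this
    _ ≤ 3 * mx := by linarith
end

section
/- If A ~ Poisson(λ) and D ~ Binomial(N, μ) are independent with λ < Nμ and Nμ ≥ 0, then E[|A − D|³] ≤ 40·max(1, (Nμ)²)·Nμ. -/
open Real

lemma poisson_sum (lam : ℝ) : ∑' a : ℕ, poissonPMF lam a = 1 := by
  unfold poissonPMF
  rw [show (fun a : ℕ => Real.exp (-lam) * lam ^ a / a.factorial)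
      = (fun a : ℕ => Real.exp (-lam) * (lam ^ a / a.factorial)) by
    funext a; ring]
  rw [tsum_mul_left,
    show (∑' a : ℕ, lam ^ a / a.factorial) = Real.exp lam by
      rw [Real.exp_eq_exp_ℝ, NormedSpace.exp_eq_tsum_div],
    ← Real.exp_add]
  simp

lemma poisson_summable (lam : ℝ) : Summable (poissonPMF lam) := by
  unfold poissonPMF
  have := (Real.summable_pow_div_factorial lam).mul_left (Real.exp (-lam))
  convert this using 2 with a
  · rfl
  ring

lemma poisson_shift (lam : ℝ) (a : ℕ) :
    poissonPMF lam (a + 1) * ((a : ℝ) + 1) = lam * poissonPMF lam a := by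
  unfold poissonPMF
  rw [Nat.factorial_succ]
  have h : (a.factorial : ℝ) ≠ 0 := Nat.cast_ne_zero.mpr a.factorial_ne_zero
  push_cast
  field_simp
  ring

lemma poisson_sum1 (lam : ℝ) :
    Summable (fun a : ℕ => poissonPMF lam a * a) ∧
    ∑' a : ℕ, poissonPMF lam a * a = lam := by
  have hsum : Summable (fun a : ℕ => poissonPMF lam a * a) := by
    rw [← summable_nat_add_iff 1]
    have := (poisson_summable lam).mul_left lam
    convert this using 2 with a
    · rfl
    rw [← poisson_shift]; push_cast; ring
  refine ⟨hsum, ?_⟩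
  rw [Summable.tsum_eq_zero_add hsum]
  simp only [Nat.cast_zero, mul_zero, zero_add]
  rw [show (fun a : ℕ => poissonPMF lam (a+1) * ((a+1 : ℕ) : ℝ))
      = fun a : ℕ => lam * poissonPMF lam a by
    funext a; rw [← poisson_shift]; push_cast; ring]
  rw [tsum_mul_left, poisson_sum, mul_one]

lemma poisson_sum2 (lam : ℝ) :
    Summable (fun a : ℕ => poissonPMF lam a * a * ((a : ℝ) - 1)) ∧
    ∑' a : ℕ, poissonPMF lam a * a * ((a : ℝ) - 1) = lam ^ 2 := by
  have hsum : Summable (fun a : ℕ => poissonPMF lam a * a * ((a : ℝ) - 1)) := by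
    rw [← summable_nat_add_iff 1]
    have := (poisson_sum1 lam).1.mul_left lam
    convert this using 2 with a
    · rfl
    have h := poisson_shift lam a
    push_cast
    nlinarith [h]
  refine ⟨hsum, ?_⟩
  rw [Summable.tsum_eq_zero_add hsum]
  simp only [Nat.cast_zero, mul_zero, zero_add, zero_mul]
  rw [show (fun a : ℕ => poissonPMF lam (a+1) * ((a+1 : ℕ) : ℝ) * (((a+1 : ℕ) : ℝ) - 1))
      = fun a : ℕ => lam * (poissonPMF lam a * a) by
    funext a
    have h := poisson_shift lam a
    push_cast
    nlinarith [h]]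
  rw [tsum_mul_left, (poisson_sum1 lam).2]
  ring

lemma poisson_sum3 (lam : ℝ) :
    Summable (fun a : ℕ => poissonPMF lam a * a * ((a : ℝ) - 1) * ((a : ℝ) - 2)) ∧
    ∑' a : ℕ, poissonPMF lam a * a * ((a : ℝ) - 1) * ((a : ℝ) - 2) = lam ^ 3 := by
  have hsum : Summable (fun a : ℕ => poissonPMF lam a * a * ((a : ℝ) - 1) * ((a : ℝ) - 2)) := by
    rw [← summable_nat_add_iff 1]
    have := (poisson_sum2 lam).1.mul_left lam
    convert this using 2 with a
    · rfl
    have h := poisson_shift lam a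
    push_cast
    linear_combination ((a:ℝ) * ((a:ℝ)-1)) * h
  refine ⟨hsum, ?_⟩
  rw [Summable.tsum_eq_zero_add hsum]
  simp only [Nat.cast_zero, mul_zero, zero_add, zero_mul]
  rw [show (fun a : ℕ => poissonPMF lam (a+1) * ((a+1 : ℕ) : ℝ) * (((a+1 : ℕ) : ℝ) - 1) * (((a+1 : ℕ) : ℝ) - 2))
      = fun a : ℕ => lam * (poissonPMF lam a * a * ((a : ℝ) - 1)) by
    funext a
    have h := poisson_shift lam a
    push_cast
    linear_combination ((a:ℝ) * ((a:ℝ)-1)) * h]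
  rw [tsum_mul_left, (poisson_sum2 lam).2]
  ring

lemma poisson_cube_summable (lam : ℝ) :
    Summable (fun a : ℕ => poissonPMF lam a * (a : ℝ) ^ 3) := by
  have h := ((poisson_sum3 lam).1.add ((poisson_sum2 lam).1.mul_left 3)).add (poisson_sum1 lam).1
  convert h using 2 with a
  ring

lemma poisson_cube_sum (lam : ℝ) :
    ∑' a : ℕ, poissonPMF lam a * (a : ℝ) ^ 3 = lam ^ 3 + 3 * lam ^ 2 + lam := by
  have e : (fun a : ℕ => poissonPMF lam a * (a : ℝ) ^ 3)
      = fun a : ℕ => (poissonPMF lam a * a * ((a : ℝ) - 1) * ((a : ℝ) - 2)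
          + 3 * (poissonPMF lam a * a * ((a : ℝ) - 1))) + poissonPMF lam a * a := by
    funext a; ring
  rw [e, Summable.tsum_add ((poisson_sum3 lam).1.add ((poisson_sum2 lam).1.mul_left 3)) (poisson_sum1 lam).1,
    Summable.tsum_add (poisson_sum3 lam).1 ((poisson_sum2 lam).1.mul_left 3),
    tsum_mul_left, (poisson_sum3 lam).2, (poisson_sum2 lam).2, (poisson_sum1 lam).2]

lemma binom_sum (M : ℕ) (r : ℝ) :
    ∑ d ∈ Finset.range (M + 1), binomPMF M r d = 1 := by
  have h := add_pow r (1 - r) M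
  simp only [add_sub_cancel, one_pow] at h
  rw [show (∑ d ∈ Finset.range (M + 1), binomPMF M r d)
      = ∑ m ∈ Finset.range (M + 1), r ^ m * (1 - r) ^ (M - m) * ((M.choose m : ℕ) : ℝ) from
    Finset.sum_congr rfl fun d _ => by unfold binomPMF; ring, ← h]

lemma binom_shift (M : ℕ) (r : ℝ) (d : ℕ) :
    binomPMF (M + 1) r (d + 1) * ((d : ℝ) + 1) = ((M : ℝ) + 1) * r * binomPMF M r d := by
  unfold binomPMF
  have h := Nat.add_one_mul_choose_eq M d
  have h' : ((M : ℝ) + 1) * (M.choose d) = ((M + 1).choose (d + 1)) * ((d : ℝ) + 1) := by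
    exact_mod_cast congrArg (Nat.cast (R := ℝ)) h
  rw [Nat.succ_sub_succ]
  linear_combination (-(r ^ (d + 1) * (1 - r) ^ (M - d))) * h'

lemma binom_sum1 (M : ℕ) (r : ℝ) :
    ∑ d ∈ Finset.range (M + 1), binomPMF M r d * d = M * r := by
  cases M with
  | zero => simp
  | succ M =>
    rw [Finset.sum_range_succ']
    simp only [Nat.cast_zero, mul_zero, add_zero]
    rw [show (∑ d ∈ Finset.range (M + 1), binomPMF (M+1) r (d+1) * ((d+1 : ℕ) : ℝ))
        = ∑ d ∈ Finset.range (M + 1), ((M : ℝ) + 1) * r * binomPMF M r d by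
      refine Finset.sum_congr rfl fun d _ => ?_
      rw [← binom_shift]; push_cast; ring]
    rw [← Finset.mul_sum, binom_sum]
    push_cast; ring

lemma binom_sum2 (M : ℕ) (r : ℝ) :
    ∑ d ∈ Finset.range (M + 1), binomPMF M r d * d * ((d : ℝ) - 1)
      = (M : ℝ) * ((M : ℝ) - 1) * r ^ 2 := by
  cases M with
  | zero => simp
  | succ M =>
    rw [Finset.sum_range_succ']
    simp only [Nat.cast_zero, mul_zero, add_zero, zero_mul]
    rw [show (∑ d ∈ Finset.range (M + 1), binomPMF (M+1) r (d+1) * ((d+1 : ℕ) : ℝ) * (((d+1 : ℕ):ℝ) - 1))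
        = ∑ d ∈ Finset.range (M + 1), ((M : ℝ) + 1) * r * (binomPMF M r d * d) by
      refine Finset.sum_congr rfl fun d _ => ?_
      have h := binom_shift M r d
      push_cast
      linear_combination (d : ℝ) * h]
    rw [← Finset.mul_sum, binom_sum1]
    push_cast; ring

lemma binom_sum3 (M : ℕ) (r : ℝ) :
    ∑ d ∈ Finset.range (M + 1), binomPMF M r d * d * ((d : ℝ) - 1) * ((d : ℝ) - 2)
      = (M : ℝ) * ((M : ℝ) - 1) * ((M : ℝ) - 2) * r ^ 3 := by
  cases M with
  | zero => simp
  | succ M =>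
    rw [Finset.sum_range_succ']
    simp only [Nat.cast_zero, mul_zero, add_zero, zero_mul]
    rw [show (∑ d ∈ Finset.range (M + 1), binomPMF (M+1) r (d+1) * ((d+1 : ℕ) : ℝ) * (((d+1 : ℕ):ℝ) - 1) * (((d+1 : ℕ):ℝ) - 2))
        = ∑ d ∈ Finset.range (M + 1), ((M : ℝ) + 1) * r * (binomPMF M r d * d * ((d : ℝ) - 1)) by
      refine Finset.sum_congr rfl fun d _ => ?_
      have h := binom_shift M r d
      push_cast
      linear_combination ((d : ℝ) * ((d : ℝ) - 1)) * h]
    rw [← Finset.mul_sum, binom_sum2]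
    push_cast; ring

lemma binom_cube_sum (M : ℕ) (r : ℝ) :
    ∑ d ∈ Finset.range (M + 1), binomPMF M r d * (d : ℝ) ^ 3
      = (M : ℝ) * ((M : ℝ) - 1) * ((M : ℝ) - 2) * r ^ 3
        + 3 * ((M : ℝ) * ((M : ℝ) - 1) * r ^ 2) + (M : ℝ) * r := by
  rw [← binom_sum3 M r, ← binom_sum2 M r, ← binom_sum1 M r,
    Finset.mul_sum, ← Finset.sum_add_distrib, ← Finset.sum_add_distrib]
  refine Finset.sum_congr rfl fun d _ => ?_
  ring

lemma poisson_nonneg (lam : ℝ) (hl : 0 < lam) (a : ℕ) : 0 ≤ poissonPMF lam a := by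
  unfold poissonPMF
  positivity

lemma binom_nonneg (M : ℕ) (r : ℝ) (h0 : 0 < r) (h1 : r < 1) (d : ℕ) : 0 ≤ binomPMF M r d := by
  unfold binomPMF
  have : (0:ℝ) ≤ 1 - r := by linarith
  positivity


/-- If `A ~ Poisson(lam)` and `D ~ Binomial(N, mu)` are independent, with
`N ≥ 1`, `0 < mu < 1`, and `0 < lam < N·mu`, then
`E[|A − D|³] ≤ 40 · max(1, (N·mu)²) · N·mu`. -/
theorem poisson_binomial_diff_third_moment (lam mu : ℝ) (N : ℕ)
    (hN : 1 ≤ N) (hmu0 : 0 < mu) (hmu1 : mu < 1)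
    (hlam0 : 0 < lam) (hstab : lam < N * mu) :
    ∑' a : ℕ, ∑ d ∈ Finset.range (N + 1),
        poissonPMF lam a * binomPMF N mu d * |(a : ℝ) - d| ^ 3
      ≤ 40 * max 1 (((N : ℝ) * mu) ^ 2) * ((N : ℝ) * mu) := by
  set m : ℝ := (N : ℝ) * mu with hm
  have hN1 : (1 : ℝ) ≤ (N : ℝ) := by exact_mod_cast hN
  have hm0 : 0 < m := by positivity
  -- third moment of the binomial
  set T : ℝ := ∑ d ∈ Finset.range (N + 1), binomPMF N mu d * (d : ℝ) ^ 3 with hT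
  have hT0 : 0 ≤ T := Finset.sum_nonneg fun d _ => by
    have := binom_nonneg N mu hmu0 hmu1 d
    positivity
  -- pointwise bound on the inner sum
  have key : ∀ a : ℕ, ∑ d ∈ Finset.range (N + 1),
      poissonPMF lam a * binomPMF N mu d * |(a : ℝ) - d| ^ 3
      ≤ poissonPMF lam a * (4 * (a : ℝ) ^ 3) + poissonPMF lam a * (4 * T) := by
    intro a
    have step1 : ∑ d ∈ Finset.range (N + 1),
        poissonPMF lam a * binomPMF N mu d * |(a : ℝ) - d| ^ 3
        ≤ ∑ d ∈ Finset.range (N + 1),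
        poissonPMF lam a * binomPMF N mu d * (4 * (a : ℝ) ^ 3 + 4 * (d : ℝ) ^ 3) := by
      refine Finset.sum_le_sum fun d _ => ?_
      have hp := poisson_nonneg lam hlam0 a
      have hq := binom_nonneg N mu hmu0 hmu1 d
      have habs : |(a : ℝ) - d| ≤ (a : ℝ) + d := by
        calc |(a:ℝ) - d| ≤ |(a:ℝ)| + |(d:ℝ)| := abs_sub (a:ℝ) (d:ℝ)
          _ = (a:ℝ) + d := by rw [abs_of_nonneg (by positivity), abs_of_nonneg (by positivity)]
      have hcube : |(a : ℝ) - d| ^ 3 ≤ ((a : ℝ) + d) ^ 3 :=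
        pow_le_pow_left₀ (abs_nonneg _) habs 3
      have hbound : ((a : ℝ) + d) ^ 3 ≤ 4 * (a : ℝ) ^ 3 + 4 * (d : ℝ) ^ 3 := by
        have ha : (0:ℝ) ≤ a := Nat.cast_nonneg a
        have hd : (0:ℝ) ≤ d := Nat.cast_nonneg d
        nlinarith [sq_nonneg ((a:ℝ) - d), mul_nonneg ha hd, sq_nonneg ((a:ℝ)+d)]
      have := le_trans hcube hbound
      have hpq : 0 ≤ poissonPMF lam a * binomPMF N mu d := mul_nonneg hp hq
      exact mul_le_mul_of_nonneg_left this hpq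
    have step2 : ∑ d ∈ Finset.range (N + 1),
        poissonPMF lam a * binomPMF N mu d * (4 * (a : ℝ) ^ 3 + 4 * (d : ℝ) ^ 3)
        = poissonPMF lam a * (4 * (a : ℝ) ^ 3) + poissonPMF lam a * (4 * T) := by
      calc ∑ d ∈ Finset.range (N + 1),
          poissonPMF lam a * binomPMF N mu d * (4 * (a : ℝ) ^ 3 + 4 * (d : ℝ) ^ 3)
          = ∑ d ∈ Finset.range (N + 1),
            (poissonPMF lam a * (4 * (a : ℝ) ^ 3) * binomPMF N mu d
              + (4 * poissonPMF lam a) * (binomPMF N mu d * (d : ℝ) ^ 3)) :=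
          Finset.sum_congr rfl fun d _ => by ring
        _ = poissonPMF lam a * (4 * (a : ℝ) ^ 3) * (∑ d ∈ Finset.range (N + 1), binomPMF N mu d)
            + (4 * poissonPMF lam a) * (∑ d ∈ Finset.range (N + 1), binomPMF N mu d * (d : ℝ) ^ 3) := by
          rw [Finset.sum_add_distrib, ← Finset.mul_sum, ← Finset.mul_sum]
        _ = poissonPMF lam a * (4 * (a : ℝ) ^ 3) + poissonPMF lam a * (4 * T) := by
          rw [binom_sum, ← hT]; ring
    linarith [step1, step2.le, step2.ge]
  -- summability
  have hS1 : Summable (fun a : ℕ => poissonPMF lam a * (4 * (a : ℝ) ^ 3) + poissonPMF lam a * (4 * T)) := by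
    have h1 : Summable (fun a : ℕ => 4 * (poissonPMF lam a * (a : ℝ) ^ 3)) :=
      (poisson_cube_summable lam).mul_left 4
    have h2 : Summable (fun a : ℕ => (4 * T) * poissonPMF lam a) :=
      (poisson_summable lam).mul_left (4 * T)
    have := h1.add h2
    convert this using 2 with a
    ring
  have hS0 : Summable (fun a : ℕ => ∑ d ∈ Finset.range (N + 1),
      poissonPMF lam a * binomPMF N mu d * |(a : ℝ) - d| ^ 3) := by
    refine Summable.of_nonneg_of_le (fun a => ?_) key hS1
    refine Finset.sum_nonneg fun d _ => ?_
    have hp := poisson_nonneg lam hlam0 a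
    have hq := binom_nonneg N mu hmu0 hmu1 d
    positivity
  -- bound the tsum
  have hle : ∑' a : ℕ, ∑ d ∈ Finset.range (N + 1),
      poissonPMF lam a * binomPMF N mu d * |(a : ℝ) - d| ^ 3
      ≤ ∑' a : ℕ, (poissonPMF lam a * (4 * (a : ℝ) ^ 3) + poissonPMF lam a * (4 * T)) :=
    Summable.tsum_le_tsum key hS0 hS1
  have heval : ∑' a : ℕ, (poissonPMF lam a * (4 * (a : ℝ) ^ 3) + poissonPMF lam a * (4 * T))
      = 4 * (lam ^ 3 + 3 * lam ^ 2 + lam) + 4 * T := by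
    rw [show (fun a : ℕ => poissonPMF lam a * (4 * (a : ℝ) ^ 3) + poissonPMF lam a * (4 * T))
        = fun a : ℕ => 4 * (poissonPMF lam a * (a : ℝ) ^ 3) + (4 * T) * poissonPMF lam a by
      funext a; ring]
    rw [Summable.tsum_add ((poisson_cube_summable lam).mul_left 4) ((poisson_summable lam).mul_left (4 * T)),
      tsum_mul_left, tsum_mul_left, poisson_cube_sum, poisson_sum]
    ring
  -- the numeric bound
  have hTval : T = (N : ℝ) * ((N : ℝ) - 1) * ((N : ℝ) - 2) * mu ^ 3
      + 3 * ((N : ℝ) * ((N : ℝ) - 1) * mu ^ 2) + (N : ℝ) * mu := binom_cube_sum N mu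
  have hTle : T ≤ m ^ 3 + 3 * m ^ 2 + m := by
    rw [hTval, hm]
    have h1 : (N : ℝ) * ((N : ℝ) - 1) * ((N : ℝ) - 2) * mu ^ 3 ≤ ((N:ℝ) * mu) ^ 3 := by
      have : (N : ℝ) * ((N : ℝ) - 1) * ((N : ℝ) - 2) ≤ (N:ℝ)^3 := by nlinarith
      have hmu3 : (0:ℝ) < mu ^ 3 := by positivity
      calc (N : ℝ) * ((N : ℝ) - 1) * ((N : ℝ) - 2) * mu ^ 3 ≤ (N:ℝ)^3 * mu ^ 3 :=
        mul_le_mul_of_nonneg_right this hmu3.le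
        _ = ((N:ℝ) * mu)^3 := by ring
    have h2 : (N : ℝ) * ((N : ℝ) - 1) * mu ^ 2 ≤ ((N:ℝ) * mu) ^ 2 := by nlinarith
    linarith
  have hlamle : lam ^ 3 + 3 * lam ^ 2 + lam ≤ m ^ 3 + 3 * m ^ 2 + m := by
    have h3 : lam ^ 3 ≤ m ^ 3 := pow_le_pow_left₀ hlam0.le hstab.le 3
    have h2 : lam ^ 2 ≤ m ^ 2 := pow_le_pow_left₀ hlam0.le hstab.le 2
    linarith
  have hmax1 : (1:ℝ) ≤ max 1 (m ^ 2) := le_max_left _ _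
  have hmax2 : m ^ 2 ≤ max 1 (m ^ 2) := le_max_right _ _
  have hmaxm : m ≤ max 1 (m ^ 2) := by
    rcases le_total m 1 with h | h
    · linarith
    · have : m ≤ m ^ 2 := by nlinarith
      linarith
  have hfinal : 4 * (lam ^ 3 + 3 * lam ^ 2 + lam) + 4 * T ≤ 40 * max 1 (m ^ 2) * m := by
    have e1 : m ^ 3 ≤ max 1 (m ^ 2) * m := by
      have : m ^ 3 = m ^ 2 * m := by ring
      rw [this]; exact mul_le_mul_of_nonneg_right hmax2 hm0.le
    have e2 : m ^ 2 ≤ max 1 (m ^ 2) * m := by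
      nlinarith [mul_le_mul_of_nonneg_right hmaxm hm0.le]
    have e3 : m ≤ max 1 (m ^ 2) * m := by
      nlinarith
    nlinarith [hTle, hlamle]
  calc _ ≤ _ := hle
    _ = _ := heval
    _ ≤ _ := hfinal
end

section
/- With a(x) as in the state-dependent diffusion coefficient (a(x) = μ(1+Λ) for x ≤ −1/δ, a(x) = μ(2−μ+δ(1−μ)x+μx²) for −1/δ ≤ x ≤ −ζ, constant for x ≥ −ζ), for all real x one has |x·a'(x)|/a(x) ≤ max(1−μ, 2)·1_{x ∈ (−1/δ, −ζ]}, where a'(x) is interpreted as the left derivative at x = −1/δ and x = −ζ. -/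
open Real

/-- Bound on `|x·a'(x)|/a(x)` for the state-dependent diffusion coefficient,
where `a'` is interpreted as the left derivative at `x = −1/δ` and `x = −ζ`
(and vanishes outside `(−1/δ, −ζ]`). -/
theorem diffusion_coefficient_derivative_bound
    (R N μ δ ζ Λ : ℝ) (hR : 1 ≤ R) (hRN : R < N) (hμ0 : 0 < μ) (hμ1 : μ < 1)
    (hδ : δ = 1 / Real.sqrt R) (hζ : ζ = (R - N) / Real.sqrt R) (hΛ : Λ = R * μ)
    (a a' : ℝ → ℝ)
    (ha : ∀ x : ℝ, a x =
      if x ≤ -(1 / δ) then μ * (1 + Λ)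
      else if x ≤ -ζ then μ * (2 - μ + δ * (1 - μ) * x + μ * x ^ 2)
      else μ * (2 - μ + δ * (1 - μ) * |ζ| + μ * ζ ^ 2))
    (ha' : ∀ x : ℝ, a' x =
      if x ≤ -(1 / δ) then 0
      else if x ≤ -ζ then μ * (δ * (1 - μ) + 2 * μ * x)
      else 0) :
    ∀ x : ℝ, |x * a' x| / a x
      ≤ max (1 - μ) 2 * (if -(1 / δ) < x ∧ x ≤ -ζ then 1 else 0) := by
  intro x
  have hRpos : (0:ℝ) < R := lt_of_lt_of_le one_pos hR
  have hsR : 0 < Real.sqrt R := Real.sqrt_pos.mpr hRpos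
  have hδpos : 0 < δ := by rw [hδ]; positivity
  rw [ha' x, ha x]
  by_cases h1 : x ≤ -(1/δ)
  · rw [if_pos h1, if_pos h1]
    have hc : ¬ (-(1/δ) < x ∧ x ≤ -ζ) := fun h => absurd h.1 (not_lt.mpr h1)
    rw [if_neg hc]
    simp
  · rw [if_neg h1, if_neg h1]
    by_cases h2 : x ≤ -ζ
    · rw [if_pos h2, if_pos h2, if_pos ⟨not_le.mp h1, h2⟩, mul_one]
      have hmax : max (1-μ) 2 = 2 := max_eq_right (by linarith)
      rw [hmax]
      have hx1 : -(1/δ) < x := not_le.mp h1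
      have hdx : -1 < δ * x := by
        have h := mul_lt_mul_of_pos_left hx1 hδpos
        have h0 : δ * -(1/δ) = -1 := by field_simp
        linarith
      have hsx : -(1-μ) < δ*(1-μ)*x := by nlinarith
      have hx2 : 0 ≤ μ * x^2 := mul_nonneg hμ0.le (sq_nonneg x)
      have hinner : 0 < 2 - μ + δ*(1-μ)*x + μ*x^2 := by linarith
      have hD : 0 < μ * (2 - μ + δ*(1-μ)*x + μ*x^2) := mul_pos hμ0 hinner
      rw [div_le_iff₀ hD, abs_le]
      constructor
      · nlinarith [mul_lt_mul_of_pos_left hsx hμ0, mul_nonneg hμ0.le hx2, mul_pos hμ0 hinner]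
      · nlinarith [mul_lt_mul_of_pos_left hsx hμ0, mul_nonneg hμ0.le hx2, mul_pos hμ0 hinner]
    · rw [if_neg h2, if_neg h2]
      have hc : ¬ (-(1/δ) < x ∧ x ≤ -ζ) := fun h => h2 h.2
      rw [if_neg hc]
      simp
end

section
/- Consider two sequences of customers arriving at common times t₁ ≤ t₂ ≤ ... to two N-server FCFS queues: system C where customer i has service time sᵢ > 0, and system M where customer i occupies a server for duration at least ⌈sᵢ⌉ after admission. If both systems start empty, then for every customer i, the admission time and departure time in system C are no later than the corresponding times in system M: adm_i^C ≤ adm_i^M and dis_i^C ≤ dis_i^M. -/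
open Real

/-- Pathwise coupling of two `N`-server FCFS queues with common arrival times:
in system `C` customer `i` has service time `sᵢ`, while in system `M` customer
`i` occupies a server for at least `⌈sᵢ⌉` after admission. Both start empty
(the admission rule below encodes that a customer is admitted at the earliest
time `≥` its arrival time at which fewer than `N` previously arrived customers
are still in service). Then every customer is admitted and departs no later in
system `C` than in system `M`. -/
theorem fcfs_coupling_admission_departure
    (N : ℕ) (hN : 1 ≤ N)
    (t s : ℕ → ℝ) (ht : Monotone t) (hs : ∀ i, 0 < s i)
    (admC disC admM disM : ℕ → ℝ)
    -- departure rules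
    (hdisC : ∀ i, disC i = admC i + s i)
    (hdisM : ∀ i, admM i + (⌈s i⌉ : ℝ) ≤ disM i)
    -- FCFS admission rule in system C
    (hadmC1 : ∀ i, t i ≤ admC i)
    (hadmC2 : ∀ i, ((Finset.range i).filter (fun j => admC i < disC j)).card < N)
    (hadmC3 : ∀ i, ∀ τ : ℝ, t i ≤ τ → τ < admC i →
      N ≤ ((Finset.range i).filter (fun j => τ < disC j)).card)
    -- FCFS admission rule in system M
    (hadmM1 : ∀ i, t i ≤ admM i)
    (hadmM2 : ∀ i, ((Finset.range i).filter (fun j => admM i < disM j)).card < N)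
    (hadmM3 : ∀ i, ∀ τ : ℝ, t i ≤ τ → τ < admM i →
      N ≤ ((Finset.range i).filter (fun j => τ < disM j)).card) :
    ∀ i, admC i ≤ admM i ∧ disC i ≤ disM i := by
  intro i
  induction i using Nat.strong_induction_on with
  | _ i ih =>
    have hadm : admC i ≤ admM i := by
      by_contra h
      push_neg at h
      have hcard := hadmC3 i (admM i) (hadmM1 i) h
      have hsub : ((Finset.range i).filter (fun j => admM i < disC j)) ⊆
          ((Finset.range i).filter (fun j => admM i < disM j)) := by
        intro j hj
        simp only [Finset.mem_filter, Finset.mem_range] at hj ⊢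
        exact ⟨hj.1, lt_of_lt_of_le hj.2 (ih j hj.1).2⟩
      exact absurd (le_trans hcard (Finset.card_le_card hsub)) (not_le.mpr (hadmM2 i))
    refine ⟨hadm, ?_⟩
    calc disC i = admC i + s i := hdisC i
      _ ≤ admM i + (⌈s i⌉ : ℝ) := add_le_add hadm (Int.le_ceil _)
      _ ≤ disM i := hdisM i
end

section
/- With r(x) = 2b(x)/a(x) where b(x) = −μx for x ≤ −ζ, b(x) = μζ for x ≥ −ζ (ζ < 0), and a(x) the state-dependent diffusion coefficient, one has |r'(x)·a(x)| ≤ 2·max(2−μ, 3)·μ·1_{x ≤ −ζ} for all real x, where r' is interpreted as the left derivative at x = −1/δ and x = −ζ. -/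
open Real

/-- Bound on `|r'(x)·a(x)|` where `r(x) = 2b(x)/a(x)` and `r'` is interpreted as
the left derivative at `x = −1/δ` and `x = −ζ` (and `r' = 0` for `x > −ζ`). -/
theorem r_derivative_times_a_bound
    (R N μ δ ζ Λ : ℝ) (hR : 1 ≤ R) (hRN : R < N) (hμ0 : 0 < μ) (hμ1 : μ < 1)
    (hδ : δ = 1 / Real.sqrt R) (hζ : ζ = (R - N) / Real.sqrt R) (hΛ : Λ = R * μ)
    (a b r r' : ℝ → ℝ)
    (hb : ∀ x : ℝ, b x = μ * (min (x + ζ) 0 - min ζ 0))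
    (ha : ∀ x : ℝ, a x =
      if x ≤ -(1 / δ) then μ * (1 + Λ)
      else if x ≤ -ζ then μ * (2 - μ + δ * (1 - μ) * x + μ * x ^ 2)
      else μ * (2 - μ + δ * (1 - μ) * |ζ| + μ * ζ ^ 2))
    (hr : ∀ x : ℝ, r x = 2 * b x / a x)
    (hr' : ∀ x : ℝ, r' x =
      if x ≤ -(1 / δ) then -2 / (1 + Λ)
      else if x ≤ -ζ then
        (-2 * (2 - μ + δ * (1 - μ) * x + μ * x ^ 2)
            + 2 * x * (δ * (1 - μ) + 2 * μ * x))
          / (2 - μ + δ * (1 - μ) * x + μ * x ^ 2) ^ 2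
      else 0) :
    ∀ x : ℝ, |r' x * a x| ≤ 2 * max (2 - μ) 3 * μ * (if x ≤ -ζ then 1 else 0) := by
  intro x
  have hsR : 1 ≤ Real.sqrt R := by
    rw [show (1:ℝ) = Real.sqrt 1 by simp]
    exact Real.sqrt_le_sqrt hR
  have hsRpos : 0 < Real.sqrt R := lt_of_lt_of_le one_pos hsR
  have hδpos : 0 < δ := by rw [hδ]; positivity
  have hζneg : ζ < 0 := by
    rw [hζ]
    exact div_neg_of_neg_of_pos (by linarith) hsRpos
  have hδinv : 1 / δ = Real.sqrt R := by
    rw [hδ]; field_simp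
  have h1le : -(1/δ) ≤ -ζ := by
    rw [hδinv]; linarith
  set M := max (2 - μ) 3 with hMdef
  have hM3 : (3:ℝ) ≤ M := le_max_right _ _
  have hMμ : 2 - μ ≤ M := le_max_left _ _
  clear_value M
  rw [hr' x, ha x]
  by_cases h1 : x ≤ -(1/δ)
  · have h2 : x ≤ -ζ := le_trans h1 h1le
    rw [if_pos h1, if_pos h1, if_pos h2]
    have hΛpos : 0 < 1 + Λ := by rw [hΛ]; nlinarith
    have : -2 / (1 + Λ) * (μ * (1 + Λ)) = -2 * μ := by
      field_simp
    rw [this]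
    rw [abs_of_nonpos (by nlinarith)]
    nlinarith
  · rw [if_neg h1, if_neg h1]
    by_cases h2 : x ≤ -ζ
    · rw [if_pos h2, if_pos h2, if_pos h2]
      set P : ℝ := 2 - μ + δ * (1 - μ) * x + μ * x ^ 2 with hP
      have hxlb : -Real.sqrt R < x := by
        rw [← hδinv]; linarith [not_le.mp h1]
      have hδx : -(1 - μ) ≤ δ * (1 - μ) * x := by
        have h : -1 ≤ δ * x := by
          rw [hδ]
          have : -Real.sqrt R * (1 / Real.sqrt R) ≤ x * (1 / Real.sqrt R) := by
            apply mul_le_mul_of_nonneg_right (le_of_lt hxlb) (by positivity)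
          calc -1 = -Real.sqrt R * (1 / Real.sqrt R) := by field_simp
            _ ≤ x * (1 / Real.sqrt R) := this
            _ = 1 / Real.sqrt R * x := by ring
        nlinarith
      have hPge : 1 + μ * x ^ 2 ≤ P := by rw [hP]; nlinarith
      have hPpos : 0 < P := by nlinarith [sq_nonneg x, mul_nonneg hμ0.le (sq_nonneg x)]
      have hval : (-2 * P + 2 * x * (δ * (1 - μ) + 2 * μ * x)) / P ^ 2 * (μ * P)
          = μ * (2 * μ * x ^ 2 - 2 * (2 - μ)) / P := by
        field_simp
        ring
      rw [hval]
      have hx2 : 0 ≤ μ * x ^ 2 := mul_nonneg hμ0.le (sq_nonneg x)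
      clear_value P
      clear ha hb hr hr' hval hδ hζ hΛ hδinv h1le h1 h2 hζneg hP hxlb hδx
      have hC : 0 ≤ 2 * M * μ := by
        have hM0 : (0:ℝ) < M := by linarith
        positivity
      have hCP := mul_le_mul_of_nonneg_left hPge hC
      rw [abs_le]
      constructor
      · rw [neg_le, ← neg_div, div_le_iff₀ hPpos]
        nlinarith [mul_nonneg hμ0.le (show (0:ℝ) ≤ M - (2 - μ) by linarith),
          mul_nonneg hμ0.le hx2, mul_nonneg hC hx2]
      · rw [div_le_iff₀ hPpos]
        nlinarith [mul_nonneg (show (0:ℝ) ≤ M - 1 by linarith)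
            (mul_nonneg hμ0.le hx2), mul_nonneg hμ0.le hx2,
          mul_nonneg hμ0.le (show (0:ℝ) ≤ M - (2 - μ) by linarith)]
    · rw [if_neg h2, if_neg h2, if_neg h2]
      simp
end

section
/- For the M/M/N queue with arrival rate Λ > 0 and service rate ν > 0 satisfying R' = Λ/ν < N, the stationary queue-length X^C(∞) satisfies P(X^C(∞) ≤ N) ≤ (2 + 1/√R')·(1/√R')·(N − R'). -/
open Real

private lemma exp_aux (y : ℝ) : (Real.exp y - 1) * (1 - y) ≤ y := by
  have h1 : 1 - y ≤ Real.exp (-y) := by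
    have := Real.add_one_le_exp (-y); linarith
  have h2 : Real.exp y * Real.exp (-y) = 1 := by
    rw [← Real.exp_add]; simp
  rcases le_or_gt (1 - y) 0 with h | h
  · have : 0 ≤ Real.exp y - 1 := by
      nlinarith [Real.add_one_le_exp y]
    nlinarith
  · have h3 : Real.exp y * (1 - y) ≤ 1 := by
      calc Real.exp y * (1 - y) ≤ Real.exp y * Real.exp (-y) := by
            exact mul_le_mul_of_nonneg_left h1 (Real.exp_pos y).le
        _ = 1 := h2
    nlinarith

set_option maxHeartbeats 1000000 in
/-- Idle probability bound for the M/M/N (Erlang-C) queue: if `p` is the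
stationary distribution (characterized by the birth–death balance equations
`Λ·p(n) = min(n+1, N)·ν·p(n+1)`) with offered load `R' = Λ/ν < N`, then
`P(X^C(∞) ≤ N) ≤ (2 + 1/√R') · (1/√R') · (N − R')`. -/
theorem erlangC_idle_probability_bound
    (Λ ν R' : ℝ) (N : ℕ) (hN : 1 ≤ N) (hΛ : 0 < Λ) (hν : 0 < ν)
    (hR' : R' = Λ / ν) (hstab : R' < N)
    (p : ℕ → ℝ) (hp0 : ∀ n, 0 ≤ p n) (hp1 : HasSum p 1)
    (hbal : ∀ n : ℕ, Λ * p n = (min (n + 1) N : ℕ) * ν * p (n + 1)) :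
    ∑ n ∈ Finset.range (N + 1), p n
      ≤ (2 + 1 / Real.sqrt R') * (1 / Real.sqrt R') * ((N : ℝ) - R') := by
  have hνne : ν ≠ 0 := ne_of_gt hν
  have hR'pos : 0 < R' := hR' ▸ div_pos hΛ hν
  set s := Real.sqrt R' with hs_def
  have hs : 0 < s := Real.sqrt_pos.mpr hR'pos
  have hs2 : s * s = R' := Real.mul_self_sqrt hR'pos.le
  have hNpos : (0:ℝ) < N := by exact_mod_cast Nat.pos_of_ne_zero (by omega)
  have hδ : 0 < (N:ℝ) - R' := sub_pos.mpr hstab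
  set δ := (N:ℝ) - R' with hδ_def
  -- balance equations without ν
  have hb : ∀ n : ℕ, R' * p n = ((min (n + 1) N : ℕ) : ℝ) * p (n + 1) := by
    intro n
    have h := hbal n
    rw [hR']
    rw [div_mul_eq_mul_div, h]
    field_simp
  -- geometric tail
  have hρ0 : (0:ℝ) ≤ R' / N := by positivity
  have hρ1 : R' / N < 1 := (div_lt_one hNpos).mpr hstab
  have hgeo : ∀ k, p (N + k) = p N * (R' / N) ^ k := by
    intro k
    induction k with
    | zero => simp
    | succ k ih =>
      have h := hb (N + k)
      have hmin : min (N + k + 1) N = N := min_eq_right (by omega)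
      rw [hmin] at h
      have hNne : (N:ℝ) ≠ 0 := ne_of_gt hNpos
      have : p (N + (k + 1)) = (R' / N) * p (N + k) := by
        have : p (N + k + 1) = R' * p (N + k) / N := by
          field_simp at h ⊢; linarith
        rw [show N + (k+1) = N + k + 1 from rfl, this]; ring
      rw [this, ih]; ring
  have htail : ∑' k, p (k + N) = p N * (1 - R' / N)⁻¹ := by
    have hcg : ∀ k, p (k + N) = p N * (R' / N) ^ k := fun k => by
      rw [add_comm]; exact hgeo k
    rw [tsum_congr hcg, tsum_mul_left, tsum_geometric_of_lt_one hρ0 hρ1]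
  have hsplit := hp1.summable.sum_add_tsum_nat_add N
  rw [hp1.tsum_eq, htail] at hsplit
  -- hsplit : ∑ n ∈ range N, p n + p N * (1 - R'/N)⁻¹ = 1
  set Sp := ∑ n ∈ Finset.range (N + 1), p n with hSp_def
  have hSpsplit : Sp = ∑ n ∈ Finset.range N, p n + p N := Finset.sum_range_succ p N
  have h1mρ : 1 - R' / N = δ / N := by field_simp; exact hδ_def.symm
  have hkey : p N * R' = δ * (1 - Sp) := by
    rw [h1mρ] at hsplit
    have hδN : (δ / N) ≠ 0 := by positivity
    have h2 : p N * (N / δ) = 1 - (Sp - p N) := by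
      rw [inv_div] at hsplit; linarith [hSpsplit]
    have hδne : δ ≠ 0 := ne_of_gt hδ
    have hNne : (N:ℝ) ≠ 0 := ne_of_gt hNpos
    field_simp at h2
    linear_combination h2 + p N * hδ_def
  have hSp1 : Sp ≤ 1 := by nlinarith [hp0 N, hkey, hδ]
  -- E[min(X,N)] = R'
  have hmin_sum : HasSum (fun n => ((min n N : ℕ) : ℝ) * p n) R' := by
    have hfun : (fun n => R' * p n) = fun n => ((min (n + 1) N : ℕ) : ℝ) * p (n + 1) :=
      funext hb
    have h1 : HasSum (fun n => ((min (n + 1) N : ℕ) : ℝ) * p (n + 1)) R' := by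
      rw [← hfun]; simpa using hp1.mul_left R'
    have h2 := (hasSum_nat_add_iff (f := fun k => ((min k N : ℕ) : ℝ) * p k) 1).mp h1
    simpa using h2
  have hf : HasSum (fun n => ((N:ℝ) - ((min n N : ℕ) : ℝ)) * p n) ((N:ℝ) - R') := by
    have := (hp1.mul_left (N:ℝ)).sub hmin_sum
    simpa [sub_mul] using this
  have hδsum : ∑ n ∈ Finset.range N, ((N:ℝ) - n) * p n = δ := by
    have h0 : ∀ n ∉ Finset.range N, ((N:ℝ) - ((min n N : ℕ) : ℝ)) * p n = 0 := by
      intro n hn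
      rw [Finset.mem_range, not_lt] at hn
      rw [min_eq_right hn, sub_self, zero_mul]
    have ht := hf.tsum_eq
    rw [tsum_eq_sum h0] at ht
    rw [hδ_def, ← ht]
    refine Finset.sum_congr rfl fun n hn => ?_
    rw [Finset.mem_range] at hn
    rw [min_eq_left hn.le]
  -- choice of m
  set m := ⌈s⌉₊ with hm_def
  have hm1 : 1 ≤ m := Nat.one_le_iff_ne_zero.mpr (by
    intro h; rw [hm_def] at h; exact absurd (Nat.ceil_eq_zero.mp h) (not_le.mpr hs))
  have hmpos : (0:ℝ) < m := by exact_mod_cast Nat.pos_of_ne_zero (by omega)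
  have hsm : s ≤ m := Nat.le_ceil s
  have hms1 : (m:ℝ) ≤ s + 1 := (Nat.ceil_lt_add_one hs.le).le
  have hmN : m ≤ N := by
    rw [hm_def, Nat.ceil_le]
    refine (Real.sqrt_le_left hNpos.le).mpr ?_
    have hN1 : (1:ℝ) ≤ (N:ℝ) := by exact_mod_cast hN
    nlinarith [hstab, hN1, hNpos]
  -- window bound
  set q := (N:ℝ) / R' with hq_def
  have hq1 : 1 < q := (one_lt_div hR'pos).mpr hstab
  have hwin : ∀ i, i ≤ N → p (N - i) ≤ p N * q ^ i := by
    intro i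
    induction i with
    | zero => intro _; simp
    | succ i ih =>
      intro hiN
      have hih := ih (by omega)
      have h := hb (N - (i + 1))
      have hidx : N - (i + 1) + 1 = N - i := by omega
      rw [hidx] at h
      have hmin : min (N - i) N = N - i := min_eq_left (Nat.sub_le _ _)
      rw [hmin] at h
      have hcast : ((N - i : ℕ) : ℝ) ≤ (N:ℝ) := by
        have : (N - i : ℕ) ≤ N := Nat.sub_le _ _
        exact_mod_cast this
      have h1 : R' * p (N - (i + 1)) ≤ (N:ℝ) * p (N - i) := by
        rw [h]; exact mul_le_mul_of_nonneg_right hcast (hp0 _)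
      have h2 : (N:ℝ) * p (N - i) ≤ (N:ℝ) * (p N * q ^ i) :=
        mul_le_mul_of_nonneg_left hih hNpos.le
      have h3 : R' * p (N - (i + 1)) ≤ R' * (p N * q ^ (i + 1)) := by
        have : (N:ℝ) * (p N * q ^ i) = R' * (p N * q ^ (i + 1)) := by
          rw [hq_def, pow_succ]; field_simp
        linarith
      exact le_of_mul_le_mul_left (by linarith) hR'pos
  -- split the sum
  have hsplit2 : Sp = (∑ i ∈ Finset.range m, p (N - i))
      + ∑ n ∈ Finset.range (N - m + 1), p n := by
    have h1 : Sp = ∑ i ∈ Finset.range (N + 1), p (N - i) := by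
      rw [hSp_def, ← Finset.sum_range_reflect]
      exact Finset.sum_congr rfl fun i _ => by congr 1 <;> omega
    have h2 : N + 1 = m + (N - m + 1) := by omega
    rw [h1, h2, Finset.sum_range_add]
    congr 1
    rw [← Finset.sum_range_reflect (fun n => p n) (N - m + 1)]
    exact Finset.sum_congr rfl fun j hj => by
      rw [Finset.mem_range] at hj; congr 1 <;> omega
  -- bulk bound
  have hpart2 : ∑ n ∈ Finset.range (N - m + 1), p n ≤ δ / m := by
    rw [le_div_iff₀ hmpos]
    calc (∑ n ∈ Finset.range (N - m + 1), p n) * m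
        = ∑ n ∈ Finset.range (N - m + 1), (m:ℝ) * p n := by
          rw [Finset.sum_mul]; exact Finset.sum_congr rfl fun n _ => by ring
      _ ≤ ∑ n ∈ Finset.range (N - m + 1), ((N:ℝ) - n) * p n := by
          refine Finset.sum_le_sum fun n hn => ?_
          rw [Finset.mem_range] at hn
          have hn' : n + m ≤ N := by omega
          have : (m:ℝ) ≤ (N:ℝ) - n := by
            have : ((n + m : ℕ) : ℝ) ≤ (N:ℝ) := by exact_mod_cast hn'
            push_cast at this; linarith
          exact mul_le_mul_of_nonneg_right this (hp0 n)
      _ ≤ ∑ n ∈ Finset.range N, ((N:ℝ) - n) * p n := by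
          refine Finset.sum_le_sum_of_subset_of_nonneg
            (Finset.range_subset_range.mpr (by omega)) fun n hn _ => ?_
          rw [Finset.mem_range] at hn
          have : (n:ℝ) ≤ (N:ℝ) := by exact_mod_cast hn.le
          exact mul_nonneg (by linarith) (hp0 n)
      _ = δ := hδsum
  -- window sum bound
  have hpart1 : ∑ i ∈ Finset.range m, p (N - i) ≤ p N * ((q ^ m - 1) / (q - 1)) := by
    rw [← geom_sum_eq (ne_of_gt hq1) m, Finset.mul_sum]
    exact Finset.sum_le_sum fun i hi => hwin i
      (le_trans (Finset.mem_range.mp hi).le hmN)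
  set E := q ^ m - 1 with hE_def
  have hE0 : 0 ≤ E := by
    rw [hE_def]
    have h := pow_le_pow_left₀ (zero_le_one) hq1.le m
    simp only [one_pow] at h
    linarith
  have hEeq : p N * ((q ^ m - 1) / (q - 1)) = (1 - Sp) * E := by
    have hqm1 : q - 1 = δ / R' := by rw [hq_def, hδ_def]; field_simp
    rw [hE_def, hqm1]
    have hδne : δ ≠ 0 := ne_of_gt hδ
    have hR'ne : R' ≠ 0 := ne_of_gt hR'pos
    calc p N * ((q ^ m - 1) / (δ / R')) = (p N * R') * ((q ^ m - 1) / δ) := by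
          field_simp
      _ = (δ * (1 - Sp)) * ((q ^ m - 1) / δ) := by rw [hkey]
      _ = (1 - Sp) * (q ^ m - 1) := by field_simp
  rw [hEeq] at hpart1
  clear_value s δ m Sp q E
  have hmain : Sp ≤ δ / m + (1 - Sp) * E := by
    linarith [hsplit2, hpart1, hpart2]
  -- final algebra
  by_cases hT : 1 ≤ (2 + 1/s) * (1/s) * δ
  · exact hSp1.trans hT
  · push_neg at hT
    set T := (2 + 1/s) * (1/s) * δ with hT_def
    set y := (m:ℝ) * δ / R' with hy_def
    have hy0 : 0 ≤ y := by
      rw [hy_def]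
      exact div_nonneg (mul_nonneg hmpos.le hδ.le) hR'pos.le
    clear_value y
    have hEexp : E ≤ Real.exp y - 1 := by
      have h1 : q ≤ Real.exp (δ / R') := by
        have ha := Real.add_one_le_exp (δ / R')
        have hb' : q = 1 + δ / R' := by rw [hq_def, hδ_def]; field_simp; ring
        linarith
      have h2 : q ^ m ≤ (Real.exp (δ / R')) ^ m :=
        pow_le_pow_left₀ (by linarith : (0:ℝ) ≤ q) h1 m
      rw [← Real.exp_nat_mul] at h2
      have : (m:ℝ) * (δ / R') = y := by rw [hy_def]; ring
      rw [this] at h2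
      rw [hE_def]; linarith
    have hyT : y + δ / m ≤ T := by
      have hden : (0:ℝ) < s * s := mul_pos hs hs
      have h1 : y ≤ (s + 1) * δ / (s * s) := by
        rw [hy_def, ← hs2]
        gcongr
      have h2 : δ / m ≤ δ / s := div_le_div_of_nonneg_left hδ.le hs hsm
      have h3 : (s + 1) * δ / (s * s) + δ / s = T := by
        rw [hT_def]; field_simp; ring
      linarith
    have hET : E * (1 - T) ≤ T - δ / m := by
      have hdm : 0 < δ / m := div_pos hδ hmpos
      have h1T : (0:ℝ) ≤ 1 - T := by linarith
      have hexp0 : (0:ℝ) ≤ Real.exp y - 1 := by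
        have := Real.add_one_le_exp y; linarith
      have c1 : E * (1 - T) ≤ (Real.exp y - 1) * (1 - T) :=
        mul_le_mul_of_nonneg_right hEexp h1T
      have c2 : (Real.exp y - 1) * (1 - T) ≤ (Real.exp y - 1) * (1 - y) :=
        mul_le_mul_of_nonneg_left (by linarith) hexp0
      have c3 := exp_aux y
      linarith
    have h1pE : (0:ℝ) < 1 + E := by linarith
    have hfin : Sp * (1 + E) ≤ T * (1 + E) := by nlinarith [hmain, hET]
    exact le_of_mul_le_mul_right hfin h1pE
end
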